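/- arXiv:1612.02968 — 2 statements merged into one kernel-verified Lean document; each statement's English description precedes it below -/
import Mathlib

section
/- Let I and J be homogeneous ideals of R, fix integers i, j ≥ 0, and set M = H^i_I(R) and N = H^j_J(R), regarded as graded left A_n(K)-modules. Then for every ν ≥ 0 the graded K-vector space Tor^{A_n(K)}_ν(M^♯, N) is concentrated in degree -n; that is, Tor^{A_n(K)}_ν(M^♯, N)_j = 0 for all j ≠ -n. -/
/-! ### The Weyl algebra `A_n(K)` as a quotient of the free algebra. -/

/-- The defining relations of the `n`-th Weyl algebra: the `X_i` commute, the `∂_i` commute,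
and `∂_i X_j = X_j ∂_i + δ_{ij}`. -/
inductive WeylRel (K : Type) [Field K] (n : ℕ) :
    FreeAlgebra K (Fin n ⊕ Fin n) → FreeAlgebra K (Fin n ⊕ Fin n) → Prop
  | xx (i j : Fin n) : WeylRel K n
      (FreeAlgebra.ι K (Sum.inl i) * FreeAlgebra.ι K (Sum.inl j))
      (FreeAlgebra.ι K (Sum.inl j) * FreeAlgebra.ι K (Sum.inl i))
  | dd (i j : Fin n) : WeylRel K n
      (FreeAlgebra.ι K (Sum.inr i) * FreeAlgebra.ι K (Sum.inr j))
      (FreeAlgebra.ι K (Sum.inr j) * FreeAlgebra.ι K (Sum.inr i))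
  | dx (i j : Fin n) : WeylRel K n
      (FreeAlgebra.ι K (Sum.inr i) * FreeAlgebra.ι K (Sum.inl j))
      (FreeAlgebra.ι K (Sum.inl j) * FreeAlgebra.ι K (Sum.inr i) + if i = j then 1 else 0)

/-- The `n`-th Weyl algebra over `K`. -/
abbrev WeylAlgebra (K : Type) [Field K] (n : ℕ) : Type := RingQuot (WeylRel K n)

/-- The variable `X_i` (degree `+1`) in the Weyl algebra. -/
noncomputable def Wx (K : Type) [Field K] {n : ℕ} (i : Fin n) : WeylAlgebra K n :=
  RingQuot.mkAlgHom K (WeylRel K n) (FreeAlgebra.ι K (Sum.inl i))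

/-- The partial derivative `∂_i` (degree `-1`) in the Weyl algebra. -/
noncomputable def Wd (K : Type) [Field K] {n : ℕ} (i : Fin n) : WeylAlgebra K n :=
  RingQuot.mkAlgHom K (WeylRel K n) (FreeAlgebra.ι K (Sum.inr i))

/-- The Euler operator `ℰ_n = ∑ X_i ∂_i`. -/
noncomputable def weylEuler (K : Type) [Field K] (n : ℕ) : WeylAlgebra K n :=
  ∑ i : Fin n, Wx K i * Wd K i

/-- The Euler operator `ℰ_r = ∑_{i < r} X_i ∂_i` of the subalgebra `A_r(K) ⊆ A_n(K)`. -/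
noncomputable def weylEulerUpTo (K : Type) [Field K] (n r : ℕ) : WeylAlgebra K n :=
  ∑ i ∈ Finset.univ.filter (fun i : Fin n => (i : ℕ) < r), Wx K i * Wd K i

/-- Monomials of degree `d` in the variables `X_1, …, X_n` inside the Weyl algebra. -/
def xMonomials (K : Type) [Field K] (n d : ℕ) : Set (WeylAlgebra K n) :=
  {w | ∃ l : List (Fin n), l.length = d ∧ w = (l.map (Wx K)).prod}

/-- `f` is a homogeneous polynomial of degree `d` in `R = K[X_1, …, X_n] ⊆ A_n(K)`. -/
def IsHomogPoly (K : Type) [Field K] {n : ℕ} (f : WeylAlgebra K n) (d : ℕ) : Prop :=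
  f ∈ Submodule.span K (xMonomials K n d)

/-! ### Graded (left) modules over the Weyl algebra. -/

/-- A graded left `A_n(K)`-module: a module over the Weyl algebra together with an internal
`ℤ`-grading, stable under `K` and such that `X_i` raises degree by one and `∂_i` lowers it
by one. -/
structure GWM (K : Type) [Field K] (n : ℕ) where
  carrier : Type
  [acg : AddCommGroup carrier]
  [mod : Module (WeylAlgebra K n) carrier]
  deg : ℤ → AddSubgroup carrier
  isInternal : DirectSum.IsInternal deg
  k_smul : ∀ (c : K) (j : ℤ) (m : carrier), m ∈ deg j →
    algebraMap K (WeylAlgebra K n) c • m ∈ deg j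
  x_smul : ∀ (i : Fin n) (j : ℤ) (m : carrier), m ∈ deg j → Wx K i • m ∈ deg (j + 1)
  d_smul : ∀ (i : Fin n) (j : ℤ) (m : carrier), m ∈ deg j → Wd K i • m ∈ deg (j - 1)

attribute [instance] GWM.acg GWM.mod

instance {K : Type} [Field K] {n : ℕ} : CoeSort (GWM K n) Type := ⟨GWM.carrier⟩

/-- A graded `A_n(K)`-module is *generalized Eulerian* if every homogeneous element `z`
is killed by some power of `ℰ_n - |z|`. -/
def GWM.IsGenEulerian {K : Type} [Field K] {n : ℕ} (M : GWM K n) : Prop :=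
  ∀ (j : ℤ) (m : M.carrier), m ∈ M.deg j →
    ∃ a : ℕ, 1 ≤ a ∧ ((weylEuler K n - (j : WeylAlgebra K n)) ^ a) • m = 0

/-- A graded module is concentrated in degree `d` if all other graded pieces vanish. -/
def GWM.ConcentratedIn {K : Type} [Field K] {n : ℕ} (M : GWM K n) (d : ℤ) : Prop :=
  ∀ j : ℤ, j ≠ d → M.deg j = ⊥

/-! ### Koszul (co)homology of a graded module with respect to commuting operators.

The Koszul complex of operators `u : Fin c → A_n(K)` on `M` has, in homological level `i`,
the module of functions from `i`-element subsets of `Fin c` to `M`.  Cohomology `H^ν` is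
homology in level `c - ν`. -/

/-- Level `i` of the Koszul complex on `c` operators with values in `M`. -/
abbrev KosLevel {K : Type} [Field K] {n : ℕ} (M : GWM K n) (c : ℕ) (i : ℤ) : Type :=
  {S : Finset (Fin c) // (S.card : ℤ) = i} → M.carrier

/-- The Koszul differential (from level `a` to level `b`; it is the genuine differential
when `b = a - 1`): `(dψ)(T) = ∑_{k ∉ T} (-1)^{|{x ∈ T | x < k}|} u_k • ψ(T ∪ {k})`. -/
noncomputable def kosDiff {K : Type} [Field K] {n : ℕ} {M : GWM K n} {c : ℕ}
    (u : Fin c → WeylAlgebra K n) (a b : ℤ) (ψ : KosLevel M c a)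
    (T : {S : Finset (Fin c) // (S.card : ℤ) = b}) : M.carrier :=
  ∑ k ∈ (T.1)ᶜ, ((-1 : ℤ) ^ ((T.1.filter (fun x => x < k)).card)) •
    (u k • (if h : (((insert k T.1).card : ℤ)) = a then ψ ⟨insert k T.1, h⟩ else 0))

/-- A Koszul `i`-chain is a cycle if the differential to level `i - 1` kills it. -/
def kosIsCycle {K : Type} [Field K] {n : ℕ} {M : GWM K n} {c : ℕ}
    (u : Fin c → WeylAlgebra K n) (i : ℤ) (φ : KosLevel M c i) : Prop :=
  ∀ T, kosDiff u i (i - 1) φ T = 0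

/-- A Koszul `i`-chain is a boundary if it is the image of an `(i+1)`-chain. -/
def kosIsBoundary {K : Type} [Field K] {n : ℕ} {M : GWM K n} {c : ℕ}
    (u : Fin c → WeylAlgebra K n) (i : ℤ) (φ : KosLevel M c i) : Prop :=
  ∃ ψ : KosLevel M c (i + 1), (fun T => kosDiff u (i + 1) i ψ T) = φ

/-- A Koszul `i`-chain is homogeneous of (internal) degree `j`: on a subset `S` its value
lies in degree `j - ∑_{k ∈ S} deg u_k`, where `du k` is the degree of the operator `u k`. -/
def kosHomog {K : Type} [Field K] {n : ℕ} {M : GWM K n} {c : ℕ}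
    (du : Fin c → ℤ) (i j : ℤ) (φ : KosLevel M c i) : Prop :=
  ∀ S : {S : Finset (Fin c) // (S.card : ℤ) = i}, φ S ∈ M.deg (j - ∑ k ∈ S.1, du k)

/-! ### Čech complexes.

Local cohomology `H^i_I(M)` for a homogeneous ideal `I = (f_1, …, f_s)` is the `i`-th
cohomology of the Čech complex `0 → M → ⊕ M_{f_k} → ⋯`.  We encode the Čech complex by
abstract data: a family of graded `A_n(K)`-modules `L S` (for `S ⊆ {1,…,s}`), each of which
is the localization of `M` at `∏_{k ∈ S} f_k` (characterized by the usual universal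
properties: the element acts bijectively, every element is a fraction, and the kernel of the
localization map is the torsion). -/

/-- The product `f_S = ∏_{k ∈ S} f_k` (as an ordered list product). -/
noncomputable def cechProd {K : Type} [Field K] {n : ℕ} {s : ℕ}
    (f : Fin s → WeylAlgebra K n) (S : Finset (Fin s)) : WeylAlgebra K n :=
  ((S.sort (· ≤ ·)).map f).prod

/-- Data presenting the Čech complex of a graded `A_n(K)`-module `M` with respect to the
elements `f : Fin s → A_n(K)`. -/
structure CechData (K : Type) [Field K] (n : ℕ) (M : GWM K n) (s : ℕ)
    (f : Fin s → WeylAlgebra K n) where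
  /-- `L S` is the localization `M_{f_S}`, `f_S = ∏_{k ∈ S} f_k`. -/
  L : Finset (Fin s) → GWM K n
  /-- localization maps `M_{f_S} → M_{f_T}` for `S ⊆ T`. -/
  ρ : ∀ {S T : Finset (Fin s)}, S ⊆ T → (L S).carrier → (L T).carrier
  ρ_add : ∀ {S T : Finset (Fin s)} (h : S ⊆ T) (x y : (L S).carrier),
    ρ h (x + y) = ρ h x + ρ h y
  ρ_smul : ∀ {S T : Finset (Fin s)} (h : S ⊆ T) (w : WeylAlgebra K n) (x : (L S).carrier),
    ρ h (w • x) = w • ρ h x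
  ρ_deg : ∀ {S T : Finset (Fin s)} (h : S ⊆ T) (j : ℤ) (x : (L S).carrier),
    x ∈ (L S).deg j → ρ h x ∈ (L T).deg j
  ρ_id : ∀ (S : Finset (Fin s)) (x : (L S).carrier), ρ (le_refl S) x = x
  ρ_comp : ∀ {S T U : Finset (Fin s)} (h1 : S ⊆ T) (h2 : T ⊆ U) (x : (L S).carrier),
    ρ h2 (ρ h1 x) = ρ (h1.trans h2) x
  /-- the identification of `M` with the empty localization. -/
  η : M.carrier → (L ∅).carrier
  η_add : ∀ x y, η (x + y) = η x + η y
  η_smul : ∀ (w : WeylAlgebra K n) (x : M.carrier), η (w • x) = w • η x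
  η_deg : ∀ (j : ℤ) (x : M.carrier), x ∈ M.deg j → η x ∈ (L ∅).deg j
  η_bij : Function.Bijective η
  loc_bij : ∀ S : Finset (Fin s),
    Function.Bijective (fun z : (L S).carrier => (cechProd f S) • z)
  loc_surj : ∀ (S : Finset (Fin s)) (z : (L S).carrier),
    ∃ (m : M.carrier) (k : ℕ), ((cechProd f S) ^ k) • z = ρ (Finset.empty_subset S) (η m)
  loc_ker : ∀ (S : Finset (Fin s)) (m : M.carrier),
    ρ (Finset.empty_subset S) (η m) = 0 ↔ ∃ k : ℕ, ((cechProd f S) ^ k) • m = 0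

/-- Level `i` of the Čech complex. -/
abbrev CechLevel {K : Type} [Field K] {n : ℕ} {M : GWM K n} {s : ℕ}
    {f : Fin s → WeylAlgebra K n} (D : CechData K n M s f) (i : ℤ) : Type :=
  ∀ S : {S : Finset (Fin s) // (S.card : ℤ) = i}, (D.L S.1).carrier

/-- The Čech differential (from level `a` to level `b`; it is the genuine coboundary when
`b = a + 1`): `(dψ)(T) = ∑_{k ∈ T} (-1)^{|{x ∈ T | x < k}|} ρ(ψ(T \ {k}))`. -/
noncomputable def cechDiff {K : Type} [Field K] {n : ℕ} {M : GWM K n} {s : ℕ}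
    {f : Fin s → WeylAlgebra K n} (D : CechData K n M s f) (a b : ℤ) (ψ : CechLevel D a)
    (T : {S : Finset (Fin s) // (S.card : ℤ) = b}) : (D.L T.1).carrier :=
  ∑ k ∈ T.1.attach, ((-1 : ℤ) ^ ((T.1.filter (fun x => x < k.1)).card)) •
    (if h : (((T.1.erase k.1).card : ℤ)) = a then
      D.ρ (Finset.erase_subset k.1 T.1) (ψ ⟨T.1.erase k.1, h⟩) else 0)

def cechIsCycle {K : Type} [Field K] {n : ℕ} {M : GWM K n} {s : ℕ}
    {f : Fin s → WeylAlgebra K n} (D : CechData K n M s f) (i : ℤ)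
    (φ : CechLevel D i) : Prop :=
  ∀ T, cechDiff D i (i + 1) φ T = 0

def cechIsBoundary {K : Type} [Field K] {n : ℕ} {M : GWM K n} {s : ℕ}
    {f : Fin s → WeylAlgebra K n} (D : CechData K n M s f) (i : ℤ)
    (φ : CechLevel D i) : Prop :=
  ∃ ψ : CechLevel D (i - 1), (fun T => cechDiff D (i - 1) i ψ T) = φ

def cechHomog {K : Type} [Field K] {n : ℕ} {M : GWM K n} {s : ℕ}
    {f : Fin s → WeylAlgebra K n} (D : CechData K n M s f) (i j : ℤ)
    (φ : CechLevel D i) : Prop :=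
  ∀ S : {S : Finset (Fin s) // (S.card : ℤ) = i}, φ S ∈ (D.L S.1).deg j

/-- `W` realizes the `i`-th cohomology of the Čech complex `D`, i.e. `W ≅ H^i_{(f)}(M)`
as graded `A_n(K)`-modules. -/
def IsCechCohomologyOf {K : Type} [Field K] {n : ℕ} {M : GWM K n} {s : ℕ}
    {f : Fin s → WeylAlgebra K n} (D : CechData K n M s f) (i : ℤ) (W : GWM K n) : Prop :=
  ∃ π : CechLevel D i → W.carrier,
    (∀ x y, π (x + y) = π x + π y) ∧
    (∀ (w : WeylAlgebra K n) x, π (w • x) = w • π x) ∧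
    (∀ x, cechIsCycle D i x → (π x = 0 ↔ cechIsBoundary D i x)) ∧
    (∀ (j : ℤ) x, cechIsCycle D i x → cechHomog D i j x → π x ∈ W.deg j) ∧
    (∀ (j : ℤ) (w : W.carrier), w ∈ W.deg j →
      ∃ x, cechIsCycle D i x ∧ cechHomog D i j x ∧ π x = w)

/-- `R = K[X_1, …, X_n]`, as the graded left `A_n(K)`-module `A_n(K)/A_n(K)·(∂_1, …, ∂_n)`:
it is generated by a degree-zero element `e` killed by all `∂_i`, whose annihilator is
exactly the left ideal generated by the `∂_i`. -/
def IsPolynomialGWM (K : Type) [Field K] {n : ℕ} (R0 : GWM K n) : Prop :=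
  ∃ e : R0.carrier, e ∈ R0.deg 0 ∧ (∀ i : Fin n, Wd K i • e = 0) ∧
    Submodule.span (WeylAlgebra K n) {e} = ⊤ ∧
    ∀ w : WeylAlgebra K n, w • e = 0 →
      w ∈ Submodule.span (WeylAlgebra K n) (Set.range fun i : Fin n => Wd K i)

/-! ### The standard anti-automorphism `τ` of the Weyl algebra.

`τ(h ∂^α) = (-1)^{|α|} ∂^α h`; equivalently `τ` is the `K`-linear anti-automorphism with
`τ(X_i) = X_i` and `τ(∂_i) = -∂_i`.  For a left `A_n(K)`-module `M`, the standard right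
module `M^♯` has action `m ∘ u = τ(u) m`. -/

/-- The anti-automorphism `τ`, bundled with its characterizing properties (it exists and is
unique). -/
structure TauData (K : Type) [Field K] (n : ℕ) where
  tau : WeylAlgebra K n → WeylAlgebra K n
  tau_add : ∀ a b, tau (a + b) = tau a + tau b
  tau_mul : ∀ a b, tau (a * b) = tau b * tau a
  tau_algebraMap : ∀ c : K, tau (algebraMap K (WeylAlgebra K n) c) =
    algebraMap K (WeylAlgebra K n) c
  tau_x : ∀ i : Fin n, tau (Wx K i) = Wx K i
  tau_d : ∀ i : Fin n, tau (Wd K i) = - Wd K i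

/-! ### Graded free resolutions over the Weyl algebra. -/

/-- A resolution `⋯ → F_1 → F_0 → M → 0` of the graded left `A_n(K)`-module `M` by
graded free left `A_n(K)`-modules (each `F_k` has a homogeneous basis), with degree-zero
`A_n(K)`-linear differentials. -/
structure GradedFreeResData (K : Type) [Field K] (n : ℕ) (M : GWM K n) where
  F : ℕ → GWM K n
  isFree : ∀ k : ℕ, ∃ (κ : Type) (b : κ → (F k).carrier) (sh : κ → ℤ),
    (∀ x, b x ∈ (F k).deg (sh x)) ∧
    Submodule.span (WeylAlgebra K n) (Set.range b) = ⊤ ∧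
    (∀ coeff : κ →₀ WeylAlgebra K n, (coeff.sum fun x w => w • b x) = 0 → coeff = 0)
  d : ∀ k : ℕ, (F (k + 1)).carrier → (F k).carrier
  d_add : ∀ k x y, d k (x + y) = d k x + d k y
  d_smul : ∀ (k : ℕ) (w : WeylAlgebra K n) x, d k (w • x) = w • d k x
  d_deg : ∀ (k : ℕ) (j : ℤ) x, x ∈ (F (k + 1)).deg j → d k x ∈ (F k).deg j
  ε : (F 0).carrier → M.carrier
  ε_add : ∀ x y, ε (x + y) = ε x + ε y
  ε_smul : ∀ (w : WeylAlgebra K n) x, ε (w • x) = w • ε x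
  ε_deg : ∀ (j : ℤ) x, x ∈ (F 0).deg j → ε x ∈ M.deg j
  ε_surj : Function.Surjective ε
  exact0 : ∀ x : (F 0).carrier, ε x = 0 ↔ ∃ y, d 0 y = x
  exact : ∀ (k : ℕ) (x : (F (k + 1)).carrier), d k x = 0 ↔ ∃ y, d (k + 1) y = x

/-! ### `Tor^{A_n(K)}_ν(M^♯, N)` for graded `A_n(K)`-modules `M`, `N`. -/

/-- A graded `K`-vector space. -/
structure GVS (K : Type) [Field K] where
  carrier : Type
  [acg : AddCommGroup carrier]
  [mod : Module K carrier]
  deg : ℤ → Submodule K carrier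
  isInternal : DirectSum.IsInternal deg

attribute [instance] GVS.acg GVS.mod

/-- `(T, β)` realizes the tensor product `M^♯ ⊗_{A_n(K)} F` of the standard right module
`M^♯` associated to the graded left module `M` with the graded left module `F`; the
balancing condition reads `β(τ(u) m, x) = β(m, u x)` since `m ∘ u = τ(u) m` in `M^♯`. -/
def IsTensorSharpOverWeyl {K : Type} [Field K] {n : ℕ} (td : TauData K n)
    (Mw Fw : GWM K n) (T : GVS K) (β : Mw.carrier → Fw.carrier → T.carrier) : Prop :=
  (∀ m m' x, β (m + m') x = β m x + β m' x) ∧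
  (∀ m x x', β m (x + x') = β m x + β m x') ∧
  (∀ (u : WeylAlgebra K n) m x, β (td.tau u • m) x = β m (u • x)) ∧
  (∀ (c : K) m x, β (algebraMap K (WeylAlgebra K n) c • m) x = c • β m x) ∧
  (∀ (p q : ℤ) m x, m ∈ Mw.deg p → x ∈ Fw.deg q → β m x ∈ T.deg (p + q)) ∧
  (AddSubgroup.closure {t : T.carrier | ∃ m x, t = β m x} = ⊤) ∧
  (∀ (P : Type) [AddCommGroup P] (γ : Mw.carrier → Fw.carrier → P),
    (∀ m m' x, γ (m + m') x = γ m x + γ m' x) →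
    (∀ m x x', γ m (x + x') = γ m x + γ m x') →
    (∀ (u : WeylAlgebra K n) m x, γ (td.tau u • m) x = γ m (u • x)) →
    ∃ φ : T.carrier →+ P, ∀ m x, φ (β m x) = γ m x)

/-- Data computing `Tor^{A_n(K)}_•(M^♯, N)`: a graded free resolution `𝔽` of `N` by graded
free left `A_n(K)`-modules, tensored over `A_n(K)` with the right module `M^♯`. -/
structure TorWeylData (K : Type) [Field K] (n : ℕ) (M N : GWM K n) where
  td : TauData K n
  res : GradedFreeResData K n N
  T : ℕ → GVS K
  β : ∀ k, M.carrier → (res.F k).carrier → (T k).carrier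
  isTensor : ∀ k, IsTensorSharpOverWeyl td M (res.F k) (T k) (β k)
  D : ∀ k, (T (k + 1)).carrier → (T k).carrier
  D_add : ∀ k x y, D k (x + y) = D k x + D k y
  D_compat : ∀ k m g, D k (β (k + 1) m g) = β k m (res.d k g)

/-- Cycles of the complex `M^♯ ⊗_{A_n(K)} 𝔽` in homological degree `ν`. -/
def torWIsCycle {K : Type} [Field K] {n : ℕ} {M N : GWM K n} (dat : TorWeylData K n M N) :
    ∀ ν : ℕ, (dat.T ν).carrier → Prop
  | 0 => fun _ => True
  | (k + 1) => fun t => dat.D k t = 0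

/-- Boundaries of the complex `M^♯ ⊗_{A_n(K)} 𝔽` in homological degree `ν`. -/
def torWIsBoundary {K : Type} [Field K] {n : ℕ} {M N : GWM K n} (dat : TorWeylData K n M N)
    (ν : ℕ) (t : (dat.T ν).carrier) : Prop :=
  ∃ y, dat.D ν y = t

/-!
Let `Θ = ℰ_n - deg` be the Euler operator minus the grading operator of a graded
`A_n(K)`-module. Since `[ℰ_n, X_i] = X_i` and `[ℰ_n, ∂_i] = -∂_i`, `Θ` is `A_n(K)`-linear, and it
commutes with degree-preserving linear maps. It vanishes on `R` (`ℰ_n` kills `1`), hence on every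
localization `R_{f}` and on the Čech cohomology modules `M` and `N`.

As `Θ_N = 0`, the chain endomorphism `Θ` of a graded free resolution `𝔽` of `N` is
null-homotopic, so `M^♯ ⊗ Θ` maps cycles of `M^♯ ⊗ 𝔽` to boundaries. On the other hand
`τ(ℰ_n) = -ℰ_n - n`, so `M^♯ ⊗ Θ` acts on the degree-`d` part of `M^♯ ⊗ 𝔽` as multiplication
by `-(n + d)`, which is invertible for `d ≠ -n` in characteristic zero.
-/

section WeylIdentities

variable {K : Type} [Field K] {n : ℕ}

lemma wx_mul_wx (i j : Fin n) : (Wx K i : WeylAlgebra K n) * Wx K j = Wx K j * Wx K i := by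
  simpa [Wx, map_mul] using RingQuot.mkAlgHom_rel K (WeylRel.xx (K := K) (n := n) i j)

lemma wd_mul_wd (i j : Fin n) : (Wd K i : WeylAlgebra K n) * Wd K j = Wd K j * Wd K i := by
  simpa [Wd, map_mul] using RingQuot.mkAlgHom_rel K (WeylRel.dd (K := K) (n := n) i j)

lemma wd_mul_wx (i j : Fin n) :
    (Wd K i : WeylAlgebra K n) * Wx K j = Wx K j * Wd K i + if i = j then 1 else 0 := by
  simpa [Wd, Wx, map_mul, apply_ite] using
    RingQuot.mkAlgHom_rel K (WeylRel.dx (K := K) (n := n) i j)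

lemma weylEuler_mul_wx (i : Fin n) :
    weylEuler K n * Wx K i = Wx K i * weylEuler K n + Wx K i := by
  have h (l : Fin n) : Wx K l * Wd K l * Wx K i
      = Wx K i * (Wx K l * Wd K l) + if l = i then Wx K i else 0 := by
    rw [mul_assoc, wd_mul_wx l i, mul_add, ← mul_assoc, wx_mul_wx l i, mul_assoc]
    split_ifs <;> simp_all
  simp [weylEuler, Finset.sum_mul, Finset.mul_sum, h, Finset.sum_add_distrib]

lemma weylEuler_mul_wd (i : Fin n) :
    weylEuler K n * Wd K i = Wd K i * weylEuler K n - Wd K i := by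
  have h (l : Fin n) : Wd K i * (Wx K l * Wd K l)
      = Wx K l * Wd K l * Wd K i + if i = l then Wd K i else 0 := by
    rw [← mul_assoc, wd_mul_wx i l, add_mul, mul_assoc, mul_assoc, wd_mul_wd i l]
    split_ifs <;> simp_all
  simp [weylEuler, Finset.sum_mul, Finset.mul_sum, h, Finset.sum_add_distrib]

lemma TauData.tau_weylEuler (td : TauData K n) :
    td.tau (weylEuler K n) = -weylEuler K n - n := by
  have h (i : Fin n) : td.tau (Wx K i * Wd K i) = -(Wx K i * Wd K i) - 1 := by
    rw [td.tau_mul, td.tau_d, td.tau_x, neg_mul (Wd K i), wd_mul_wx, if_pos rfl]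
    abel
  have hsum : td.tau (∑ i, Wx K i * Wd K i) = ∑ i, td.tau (Wx K i * Wd K i) :=
    map_sum (AddMonoidHom.mk' td.tau td.tau_add) _ _
  simp [weylEuler, hsum, h, Finset.sum_sub_distrib]

end WeylIdentities

namespace DirectSum.IsInternal

variable {A σ : Type*} [AddCommGroup A] [SetLike σ A] [AddSubgroupClass σ A] {deg : ℤ → σ}

theorem induction_on_homogeneous (h : IsInternal deg) {P : A → Prop} (zero : P 0)
    (add : ∀ a b, P a → P b → P (a + b)) (homogeneous : ∀ p, ∀ a ∈ deg p, P a) :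
    ∀ a, P a := by
  let := h.chooseDecomposition
  exact DirectSum.Decomposition.inductionOn deg zero (fun a => homogeneous _ a a.2) add

/-- The grading operator `a ↦ ∑ p • a_p`. -/
noncomputable def gradeOp (h : IsInternal deg) : A →+ A :=
  (DirectSum.toAddMonoid fun p => p • AddSubmonoidClass.subtype (deg p)).comp
    (AddEquiv.ofBijective (DirectSum.coeAddMonoidHom deg) h).symm.toAddMonoidHom

theorem gradeOp_of_mem (h : IsInternal deg) {p : ℤ} {a : A} (ha : a ∈ deg p) :
    h.gradeOp a = p • a := by
  have hdec : (AddEquiv.ofBijective (DirectSum.coeAddMonoidHom deg) h).symm a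
      = DirectSum.of (fun q => deg q) p ⟨a, ha⟩ := by
    rw [AddEquiv.symm_apply_eq]
    exact (DirectSum.coeAddMonoidHom_of deg p ⟨a, ha⟩).symm
  simp [gradeOp, hdec]

end DirectSum.IsInternal

namespace GWM

variable {K : Type} [Field K] {n : ℕ} {M M' : GWM K n}

theorem induction_on_homogeneous {P : M.carrier → Prop} (zero : P 0)
    (add : ∀ a b, P a → P b → P (a + b)) (homogeneous : ∀ p, ∀ m ∈ M.deg p, P m) :
    ∀ m, P m :=
  M.isInternal.induction_on_homogeneous zero add homogeneous

variable (M) in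
/-- `M` is Eulerian exactly when `Θ = 0`. -/
noncomputable def theta : M.carrier →+ M.carrier :=
  DistribSMul.toAddMonoidHom M.carrier (weylEuler K n) - M.isInternal.gradeOp

theorem theta_of_mem {p : ℤ} {m : M.carrier} (hm : m ∈ M.deg p) :
    M.theta m = weylEuler K n • m - p • m := by
  simp [theta, M.isInternal.gradeOp_of_mem hm]

theorem weylEuler_smul_of_theta_eq_zero (hM : M.theta = 0) {p : ℤ} {m : M.carrier}
    (hm : m ∈ M.deg p) : weylEuler K n • m = p • m := by
  rw [← sub_eq_zero, ← theta_of_mem hm, hM, AddMonoidHom.zero_apply]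

theorem addMonoidHom_ext_homogeneous {P : Type*} [AddCommGroup P] {φ ψ : M.carrier →+ P}
    (h : ∀ p, ∀ m ∈ M.deg p, φ m = ψ m) : φ = ψ :=
  AddMonoidHom.ext <| induction_on_homogeneous (by simp) (fun a b ha hb => by simp [ha, hb]) h

theorem theta_smul_of_commutator {w : WeylAlgebra K n} {e : ℤ}
    (hw : weylEuler K n * w = w * weylEuler K n + e • w)
    (hdeg : ∀ p, ∀ m ∈ M.deg p, w • m ∈ M.deg (p + e)) (m : M.carrier) :
    M.theta (w • m) = w • M.theta m := by
  induction m using induction_on_homogeneous with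
  | zero => simp
  | add a b ha hb => rw [smul_add, map_add, map_add, smul_add, ha, hb]
  | homogeneous p m hm =>
    rw [theta_of_mem hm, theta_of_mem (hdeg p m hm), ← mul_smul, hw, add_smul, mul_smul,
      smul_sub, smul_assoc, smul_comm w p m, add_smul]
    abel

theorem theta_smul (w : WeylAlgebra K n) (m : M.carrier) :
    M.theta (w • m) = w • M.theta m := by
  obtain ⟨a, rfl⟩ := RingQuot.mkAlgHom_surjective K (WeylRel K n) w
  induction a using FreeAlgebra.induction generalizing m with
  | grade0 c =>
    rw [AlgHom.commutes]
    refine theta_smul_of_commutator (e := 0) ?_ (fun p m hm => ?_) m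
    · simp [Algebra.commutes]
    · simpa using M.k_smul c p m hm
  | grade1 x =>
    cases x with
    | inl i =>
      exact theta_smul_of_commutator (e := 1) (by simp [weylEuler_mul_wx]) (M.x_smul i) m
    | inr i =>
      change M.theta (Wd K i • m) = Wd K i • M.theta m
      refine theta_smul_of_commutator (e := -1) (by simp [weylEuler_mul_wd, sub_eq_add_neg])
        (fun p m hm => ?_) m
      simpa [sub_eq_add_neg] using M.d_smul i p m hm
  | mul a b ha hb => rw [map_mul, mul_smul, ha, hb, mul_smul]
  | add a b ha hb => rw [map_add, add_smul, map_add, ha, hb, add_smul]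

variable (M) in
noncomputable def thetaL : M.carrier →ₗ[WeylAlgebra K n] M.carrier where
  toFun := M.theta
  map_add' := map_add M.theta
  map_smul' := theta_smul

@[simp] theorem thetaL_apply (m : M.carrier) : M.thetaL m = M.theta m := rfl

theorem theta_map {φ : M.carrier →+ M'.carrier}
    (hsmul : ∀ (w : WeylAlgebra K n) m, φ (w • m) = w • φ m)
    (hdeg : ∀ p, ∀ m ∈ M.deg p, φ m ∈ M'.deg p) (m : M.carrier) :
    M'.theta (φ m) = φ (M.theta m) := by
  induction m using induction_on_homogeneous with
  | zero => simp
  | add a b ha hb => simp only [map_add, ha, hb]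
  | homogeneous p m hm =>
    rw [theta_of_mem hm, theta_of_mem (hdeg p m hm), map_sub, hsmul, map_zsmul]

end GWM

section Eulerian

variable {K : Type} [Field K] {n : ℕ}

/-- `R` is generated by `1`, which has degree `0` and is killed by `ℰ_n`. -/
theorem IsPolynomialGWM.theta_eq_zero {R : GWM K n} (hR : IsPolynomialGWM K R) :
    R.theta = 0 := by
  obtain ⟨e, he, hde, hspan, -⟩ := hR
  have hθe : R.theta e = 0 := by
    simp [GWM.theta_of_mem he, weylEuler, Finset.sum_smul, mul_smul, hde]
  ext m
  obtain ⟨w, rfl⟩ := Submodule.mem_span_singleton.mp (hspan ▸ Submodule.mem_top : m ∈ _)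
  rw [GWM.theta_smul, hθe, smul_zero, AddMonoidHom.zero_apply]

namespace CechData

variable {R : GWM K n} {s : ℕ} {f : Fin s → WeylAlgebra K n} (D : CechData K n R s f)

theorem eq_zero_of_cechProd_pow_smul_eq_zero {S : Finset (Fin s)} {k : ℕ} {z : (D.L S).carrier}
    (h : cechProd f S ^ k • z = 0) : z = 0 := by
  induction k with
  | zero => simpa using h
  | succ k ih =>
    rw [pow_succ', mul_smul, ← smul_zero (cechProd f S)] at h
    exact ih ((D.loc_bij S).injective h)

def toLoc (S : Finset (Fin s)) : R.carrier →+ (D.L S).carrier :=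
  AddMonoidHom.mk' (fun m => D.ρ (Finset.empty_subset S) (D.η m))
    (fun a b => by simp only [D.η_add, D.ρ_add])

/-- Every element of `R_{f_S}` is a fraction `m / f_S^k`, and `f_S` acts injectively. -/
theorem theta_loc_eq_zero (hR : R.theta = 0) (S : Finset (Fin s)) : (D.L S).theta = 0 := by
  have hmap (m : R.carrier) : (D.L S).theta (D.toLoc S m) = 0 := by
    rw [GWM.theta_map (fun w m => by simp [toLoc, D.η_smul, D.ρ_smul])
      (fun p m hm => D.ρ_deg _ p _ (D.η_deg p m hm)), hR, AddMonoidHom.zero_apply, map_zero]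
  ext z
  obtain ⟨m, k, hmk⟩ := D.loc_surj S z
  refine D.eq_zero_of_cechProd_pow_smul_eq_zero (k := k) ?_
  rw [← GWM.theta_smul, hmk]
  exact hmap m

end CechData

theorem IsCechCohomologyOf.theta_eq_zero {R M : GWM K n} {s : ℕ}
    {f : Fin s → WeylAlgebra K n} {D : CechData K n R s f} {i : ℤ}
    (hM : IsCechCohomologyOf D i M) (hR : R.theta = 0) : M.theta = 0 := by
  obtain ⟨π, -, πsmul, -, -, πsurj⟩ := hM
  refine GWM.addMonoidHom_ext_homogeneous fun p w hw => ?_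
  obtain ⟨x, -, hx, rfl⟩ := πsurj p w hw
  have hEx : weylEuler K n • x = (p : WeylAlgebra K n) • x := by
    funext S
    rw [Pi.smul_apply, Pi.smul_apply, Int.cast_smul_eq_zsmul]
    exact GWM.weylEuler_smul_of_theta_eq_zero (D.theta_loc_eq_zero hR S.1) (hx S)
  rw [GWM.theta_of_mem hw, ← πsmul, hEx, πsmul, Int.cast_smul_eq_zsmul, sub_self,
    AddMonoidHom.zero_apply]

end Eulerian

namespace GradedFreeResData

variable {K : Type} [Field K] {n : ℕ} {N : GWM K n} (res : GradedFreeResData K n N)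

def dL (k : ℕ) : (res.F (k + 1)).carrier →ₗ[WeylAlgebra K n] (res.F k).carrier where
  toFun := res.d k
  map_add' := res.d_add k
  map_smul' := res.d_smul k

@[simp] theorem dL_apply (k : ℕ) (x : (res.F (k + 1)).carrier) : res.dL k x = res.d k x := rfl

theorem d_d (k : ℕ) (x : (res.F (k + 2)).carrier) : res.d k (res.d (k + 1) x) = 0 :=
  (res.exact k _).mpr ⟨x, rfl⟩

theorem thetaL_comp_dL (k : ℕ) :
    (res.F k).thetaL ∘ₗ res.dL k = res.dL k ∘ₗ (res.F (k + 1)).thetaL :=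
  LinearMap.ext <| GWM.theta_map (φ := (res.dL k).toAddMonoidHom) (res.d_smul k) (res.d_deg k)

theorem exists_lift {a b : ℕ} (φ : (res.F a).carrier →ₗ[WeylAlgebra K n] (res.F b).carrier)
    (hφ : ∀ x, ∃ y, res.d b y = φ x) :
    ∃ h : (res.F a).carrier →ₗ[WeylAlgebra K n] (res.F (b + 1)).carrier,
      res.dL b ∘ₗ h = φ := by
  obtain ⟨κ, e, -, -, hspan, hindep⟩ := res.isFree a
  let basis : Module.Basis κ (WeylAlgebra K n) (res.F a).carrier :=
    Module.Basis.mk (linearIndependent_iff.mpr fun c hc => hindep c hc) hspan.ge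
  choose t ht using fun x : κ => hφ (e x)
  refine ⟨Finsupp.linearCombination _ t ∘ₗ basis.repr.toLinearMap, basis.ext fun x => ?_⟩
  rw [LinearMap.comp_apply, LinearMap.comp_apply, LinearEquiv.coe_coe, basis.repr_self,
    Finsupp.linearCombination_single, one_smul, dL_apply, ht, Module.Basis.mk_apply]

theorem exists_homotopy_zero (hN : N.theta = 0) :
    ∃ h : (res.F 0).carrier →ₗ[WeylAlgebra K n] (res.F 1).carrier,
      res.dL 0 ∘ₗ h = (res.F 0).thetaL := by
  refine res.exists_lift _ fun x => (res.exact0 _).mp ?_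
  have hε := GWM.theta_map (φ := AddMonoidHom.mk' res.ε res.ε_add) res.ε_smul res.ε_deg x
  rw [hN, AddMonoidHom.zero_apply] at hε
  exact hε.symm

theorem exists_homotopy_step {k : ℕ}
    (g : (res.F k).carrier →ₗ[WeylAlgebra K n] (res.F (k + 1)).carrier)
    (hg : res.dL k ∘ₗ g ∘ₗ res.dL k = (res.F k).thetaL ∘ₗ res.dL k) :
    ∃ g' : (res.F (k + 1)).carrier →ₗ[WeylAlgebra K n] (res.F (k + 2)).carrier,
      res.dL (k + 1) ∘ₗ g' + g ∘ₗ res.dL k = (res.F (k + 1)).thetaL := by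
  have hcycle : res.dL k ∘ₗ ((res.F (k + 1)).thetaL - g ∘ₗ res.dL k) = 0 := by
    rw [LinearMap.comp_sub, hg, res.thetaL_comp_dL, sub_self]
  obtain ⟨g', hg'⟩ := res.exists_lift _ fun x => (res.exact k _).mp congr($hcycle x)
  exact ⟨g', by rw [hg', sub_add_cancel]⟩

theorem exists_homotopy_succ (hN : N.theta = 0) (k : ℕ) :
    ∃ (h : (res.F k).carrier →ₗ[WeylAlgebra K n] (res.F (k + 1)).carrier)
      (h' : (res.F (k + 1)).carrier →ₗ[WeylAlgebra K n] (res.F (k + 2)).carrier),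
      res.dL (k + 1) ∘ₗ h' + h ∘ₗ res.dL k = (res.F (k + 1)).thetaL := by
  induction k with
  | zero =>
    obtain ⟨h, hh⟩ := res.exists_homotopy_zero hN
    exact ⟨h, res.exists_homotopy_step h (by rw [← LinearMap.comp_assoc, hh])⟩
  | succ k ih =>
    obtain ⟨h, h', hh'⟩ := ih
    refine ⟨h', res.exists_homotopy_step h' (LinearMap.ext fun x => ?_)⟩
    simpa [res.d_d] using congr($hh' (res.d (k + 1) x))

end GradedFreeResData

namespace IsTensorSharpOverWeyl

variable {K : Type} [Field K] {n : ℕ} {td : TauData K n} {M F F' : GWM K n} {T T' : GVS K}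
  {β : M.carrier → F.carrier → T.carrier} {β' : M.carrier → F'.carrier → T'.carrier}

theorem add_left (hβ : IsTensorSharpOverWeyl td M F T β) (m m' : M.carrier) (x : F.carrier) :
    β (m + m') x = β m x + β m' x :=
  hβ.1 m m' x

theorem add_right (hβ : IsTensorSharpOverWeyl td M F T β) (m : M.carrier) (x x' : F.carrier) :
    β m (x + x') = β m x + β m x' :=
  hβ.2.1 m x x'

theorem tau_smul_left (hβ : IsTensorSharpOverWeyl td M F T β) (u : WeylAlgebra K n)
    (m : M.carrier) (x : F.carrier) : β (td.tau u • m) x = β m (u • x) :=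
  hβ.2.2.1 u m x

theorem algebraMap_smul_left (hβ : IsTensorSharpOverWeyl td M F T β) (c : K)
    (m : M.carrier) (x : F.carrier) :
    β (algebraMap K (WeylAlgebra K n) c • m) x = c • β m x :=
  hβ.2.2.2.1 c m x

theorem mem_deg (hβ : IsTensorSharpOverWeyl td M F T β) {p q : ℤ}
    {m : M.carrier} {x : F.carrier} (hm : m ∈ M.deg p) (hx : x ∈ F.deg q) : β m x ∈ T.deg (p + q) :=
  hβ.2.2.2.2.1 p q m x hm hx

def bilin (hβ : IsTensorSharpOverWeyl td M F T β) : M.carrier →+ F.carrier →+ T.carrier :=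
  AddMonoidHom.mk' (fun m => AddMonoidHom.mk' (β m) (hβ.add_right m))
    fun m m' => AddMonoidHom.ext (hβ.add_left m m')

@[simp] theorem bilin_apply (hβ : IsTensorSharpOverWeyl td M F T β) (m : M.carrier)
    (x : F.carrier) : hβ.bilin m x = β m x :=
  rfl

theorem hom_ext (hβ : IsTensorSharpOverWeyl td M F T β) {P : Type*} [AddCommGroup P]
    {φ ψ : T.carrier →+ P} (h : ∀ m x, φ (β m x) = ψ (β m x)) : φ = ψ :=
  AddMonoidHom.eq_of_eqOn_dense hβ.2.2.2.2.2.1 (by rintro _ ⟨m, x, rfl⟩; exact h m x)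

theorem exists_map (hβ : IsTensorSharpOverWeyl td M F T β)
    (hβ' : IsTensorSharpOverWeyl td M F' T' β')
    (ψ : F.carrier →ₗ[WeylAlgebra K n] F'.carrier) :
    ∃ φ : T.carrier →+ T'.carrier, ∀ m x, φ (β m x) = β' m (ψ x) :=
  hβ.2.2.2.2.2.2 T'.carrier (fun m x => β' m (ψ x)) (fun m m' x => hβ'.add_left m m' (ψ x))
    (fun m x x' => by rw [map_add, hβ'.add_right])
    (fun u m x => by rw [hβ'.tau_smul_left, map_smul])

/-- The map `M^♯ ⊗ ψ`. -/
noncomputable def map (hβ : IsTensorSharpOverWeyl td M F T β)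
    (hβ' : IsTensorSharpOverWeyl td M F' T' β')
    (ψ : F.carrier →ₗ[WeylAlgebra K n] F'.carrier) : T.carrier →+ T'.carrier :=
  Classical.choose (hβ.exists_map hβ' ψ)

@[simp] theorem map_apply (hβ : IsTensorSharpOverWeyl td M F T β)
    (hβ' : IsTensorSharpOverWeyl td M F' T' β')
    (ψ : F.carrier →ₗ[WeylAlgebra K n] F'.carrier) (m : M.carrier) (x : F.carrier) :
    hβ.map hβ' ψ (β m x) = β' m (ψ x) :=
  Classical.choose_spec (hβ.exists_map hβ' ψ) m x

/-- Since `τ(ℰ_n) = -ℰ_n - n`, moving `ℰ_n` across the tensor product costs `-(n + p)`. -/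
theorem apply_theta (hβ : IsTensorSharpOverWeyl td M F T β) (hM : M.theta = 0) {p q : ℤ}
    {m : M.carrier} {x : F.carrier}
    (hm : m ∈ M.deg p) (hx : x ∈ F.deg q) :
    β m (F.theta x) = -((n : ℤ) + p + q) • β m x := by
  have hτ : td.tau (weylEuler K n) • m = -((n : ℤ) + p) • m := by
    rw [td.tau_weylEuler, sub_smul, neg_smul, GWM.weylEuler_smul_of_theta_eq_zero hM hm,
      ← Int.cast_natCast, Int.cast_smul_eq_zsmul, neg_smul, add_smul]
    abel
  rw [GWM.theta_of_mem hx, ← hβ.bilin_apply, map_sub, map_zsmul, hβ.bilin_apply, ← hβ.tau_smul_left,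
    hτ, ← hβ.bilin_apply, map_zsmul]
  simp only [AddMonoidHom.smul_apply, bilin_apply]
  module

theorem map_thetaL (hβ : IsTensorSharpOverWeyl td M F T β) (hM : M.theta = 0) :
    hβ.map hβ F.thetaL = -((n : ℤ) • AddMonoidHom.id T.carrier + T.isInternal.gradeOp) := by
  refine hβ.hom_ext fun m x => ?_
  suffices hβ.bilin.compr₂ (hβ.map hβ F.thetaL) =
      hβ.bilin.compr₂ (-((n : ℤ) • AddMonoidHom.id T.carrier + T.isInternal.gradeOp)) from
    congr($this m x)
  refine GWM.addMonoidHom_ext_homogeneous fun p m hm =>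
    GWM.addMonoidHom_ext_homogeneous fun q x hx => ?_
  simp only [AddMonoidHom.compr₂_apply, bilin_apply, map_apply, GWM.thetaL_apply,
    hβ.apply_theta hM hm hx, AddMonoidHom.neg_apply, AddMonoidHom.add_apply,
    AddMonoidHom.smul_apply, AddMonoidHom.id_apply,
    T.isInternal.gradeOp_of_mem (hβ.mem_deg hm hx)]
  module

end IsTensorSharpOverWeyl

namespace TorWeylData

variable {K : Type} [Field K] {n : ℕ} {M N : GWM K n} (dat : TorWeylData K n M N)

def DHom (k : ℕ) : (dat.T (k + 1)).carrier →+ (dat.T k).carrier :=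
  AddMonoidHom.mk' (dat.D k) (dat.D_add k)

@[simp] theorem DHom_apply (k : ℕ) (u : (dat.T (k + 1)).carrier) : dat.DHom k u = dat.D k u :=
  rfl

noncomputable def tensorMap {a b : ℕ}
    (ψ : (dat.res.F a).carrier →ₗ[WeylAlgebra K n] (dat.res.F b).carrier) :
    (dat.T a).carrier →+ (dat.T b).carrier :=
  (dat.isTensor a).map (dat.isTensor b) ψ

@[simp] theorem tensorMap_apply {a b : ℕ}
    (ψ : (dat.res.F a).carrier →ₗ[WeylAlgebra K n] (dat.res.F b).carrier)
    (m : M.carrier) (x : (dat.res.F a).carrier) :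
    dat.tensorMap ψ (dat.β a m x) = dat.β b m (ψ x) :=
  (dat.isTensor a).map_apply _ ψ m x

theorem D_smul (k : ℕ) (c : K) (u : (dat.T (k + 1)).carrier) :
    dat.D k (c • u) = c • dat.D k u := by
  have h : (dat.DHom k).comp (DistribSMul.toAddMonoidHom _ c) =
      (DistribSMul.toAddMonoidHom _ c).comp (dat.DHom k) :=
    (dat.isTensor (k + 1)).hom_ext fun m x => by
      simp [← (dat.isTensor (k + 1)).algebraMap_smul_left,
        ← (dat.isTensor k).algebraMap_smul_left, dat.D_compat]
  exact congr($h u)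

theorem tensorMap_thetaL_of_mem (hM : M.theta = 0) {ν : ℕ} {d : ℤ} {u : (dat.T ν).carrier}
    (hu : u ∈ (dat.T ν).deg d) :
    dat.tensorMap (dat.res.F ν).thetaL u = ((-((n : ℤ) + d) : ℤ) : K) • u := by
  rw [tensorMap, (dat.isTensor ν).map_thetaL hM, Int.cast_smul_eq_zsmul]
  simp only [AddMonoidHom.neg_apply, AddMonoidHom.add_apply, AddMonoidHom.smul_apply,
    AddMonoidHom.id_apply, (dat.T ν).isInternal.gradeOp_of_mem hu]
  module

theorem isBoundary_of_smul {ν : ℕ} {z : (dat.T ν).carrier} {c : K} (hc : c ≠ 0)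
    (h : torWIsBoundary dat ν (c • z)) : torWIsBoundary dat ν z := by
  obtain ⟨y, hy⟩ := h
  exact ⟨c⁻¹ • y, by rw [D_smul, hy, smul_smul, inv_mul_cancel₀ hc, one_smul]⟩

/-- `M^♯ ⊗ Θ` is null-homotopic, so it maps cycles to boundaries. -/
theorem isBoundary_tensorMap_thetaL (hN : N.theta = 0) {ν : ℕ} {z : (dat.T ν).carrier}
    (hz : torWIsCycle dat ν z) :
    torWIsBoundary dat ν (dat.tensorMap (dat.res.F ν).thetaL z) := by
  cases ν with
  | zero =>
    obtain ⟨h, hh⟩ := dat.res.exists_homotopy_zero hN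
    have hΦ : (dat.DHom 0).comp (dat.tensorMap h) = dat.tensorMap (dat.res.F 0).thetaL :=
      (dat.isTensor 0).hom_ext fun m x => by simp [dat.D_compat, ← hh]
    exact ⟨dat.tensorMap h z, congr($hΦ z)⟩
  | succ k =>
    obtain ⟨h, h', hh'⟩ := dat.res.exists_homotopy_succ hN k
    have hΦ : (dat.DHom (k + 1)).comp (dat.tensorMap h') + (dat.tensorMap h).comp (dat.DHom k) =
        dat.tensorMap (dat.res.F (k + 1)).thetaL :=
      (dat.isTensor (k + 1)).hom_ext fun m x => by
        simp [dat.D_compat, ← (dat.isTensor (k + 1)).add_right, ← hh']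
    have hz : dat.D k z = 0 := hz
    refine ⟨dat.tensorMap h' z, ?_⟩
    simpa [hz] using congr($hΦ z)

end TorWeylData

theorem torWeyl_sharp_of_local_cohomologies_concentrated_general
    (K : Type) [Field K] [CharZero K] (n : ℕ)
    (R0 : GWM K n) (hR0 : IsPolynomialGWM K R0)
    (s : ℕ) (f : Fin s → WeylAlgebra K n)
    (t : ℕ) (g : Fin t → WeylAlgebra K n)
    (i j : ℕ)
    (DI : CechData K n R0 s f) (M : GWM K n) (hM : IsCechCohomologyOf DI (i : ℤ) M)
    (DJ : CechData K n R0 t g) (N : GWM K n) (hN : IsCechCohomologyOf DJ (j : ℤ) N)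
    (ν : ℕ) (dat : TorWeylData K n M N)
    (d : ℤ) (hd : d ≠ -(n : ℤ))
    (z : (dat.T ν).carrier) (hz : torWIsCycle dat ν z) (hzd : z ∈ (dat.T ν).deg d) :
    torWIsBoundary dat ν z := by
  have hMθ : M.theta = 0 := hM.theta_eq_zero hR0.theta_eq_zero
  have hNθ : N.theta = 0 := hN.theta_eq_zero hR0.theta_eq_zero
  refine dat.isBoundary_of_smul (c := ((-((n : ℤ) + d) : ℤ) : K)) ?_ ?_
  · exact_mod_cast (by omega : -((n : ℤ) + d) ≠ 0)
  · rw [← dat.tensorMap_thetaL_of_mem hMθ hzd]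
    exact dat.isBoundary_tensorMap_thetaL hNθ hz

/-- Theorem `first`.  Let `I = (f)`, `J = (g)` be homogeneous ideals of
`R`, fix `i, j ≥ 0`, and set `M = H^i_I(R)`, `N = H^j_J(R)` (realized as Čech cohomologies
of `R₀ = R`), regarded as graded left `A_n(K)`-modules.  Then for every `ν ≥ 0` the graded
`K`-vector space `Tor^{A_n(K)}_ν(M^♯, N)` is concentrated in degree `-n`:  in the complex
`M^♯ ⊗_{A_n(K)} 𝔽` (for a graded free resolution `𝔽` of `N`), every homogeneous cycle of
degree `d ≠ -n` is a boundary. -/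
theorem torWeyl_sharp_of_local_cohomologies_concentrated
    (K : Type) [Field K] [CharZero K] (n : ℕ)
    (R0 : GWM K n) (hR0 : IsPolynomialGWM K R0)
    (s : ℕ) (f : Fin s → WeylAlgebra K n) (df : Fin s → ℕ)
    (hf : ∀ k, IsHomogPoly K (f k) (df k))
    (t : ℕ) (g : Fin t → WeylAlgebra K n) (dg : Fin t → ℕ)
    (hg : ∀ k, IsHomogPoly K (g k) (dg k))
    (i j : ℕ)
    (DI : CechData K n R0 s f) (M : GWM K n) (hM : IsCechCohomologyOf DI (i : ℤ) M)
    (DJ : CechData K n R0 t g) (N : GWM K n) (hN : IsCechCohomologyOf DJ (j : ℤ) N)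
    (ν : ℕ) (dat : TorWeylData K n M N)
    (d : ℤ) (hd : d ≠ -(n : ℤ))
    (z : (dat.T ν).carrier) (hz : torWIsCycle dat ν z) (hzd : z ∈ (dat.T ν).deg d) :
    torWIsBoundary dat ν z :=
  torWeyl_sharp_of_local_cohomologies_concentrated_general K n R0 hR0 s f t g i j DI M hM DJ N hN ν
    dat d hd z hz hzd
end

section
/- Let 𝒯 be a graded Lyubeznik functor on the category *Mod(R) of graded R-modules. Then 𝒯(R) is a generalized Eulerian A_n(K)-module. -/
/-! ### Graded Lyubeznik functors.

A homogeneous locally closed subset `Y = Y'' - Y'` of `Spec R` is presented by a list of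
homogeneous polynomials `f : Fin s → R`, of which the first `sL` generate the ideal of
`Y''` and all of them generate the ideal of `Y'` (any pair of homogeneous closed sets
`Y' ⊆ Y''` arises this way).  Then `RΓ_{Y'}` is the full Čech complex, `RΓ_{Y''}` the Čech
complex on the first `sL` elements, and `RΓ_Y` is the mapping cone of the natural chain map
`RΓ_{Y'} → RΓ_{Y''}`, so that the exact sequence
`H^i_{Y'} → H^i_{Y''} → H^i_Y → H^{i+1}_{Y'}` holds.  A graded Lyubeznik functor value is a
finite composition of the functors `H^i_Y(-)` and kernels of the three arrows above. -/

section Lyubeznik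

variable {K : Type} [Field K] {n : ℕ} {M : GWM K n} {s : ℕ} {f : Fin s → WeylAlgebra K n}

/-- Level `i` of the Čech subcomplex on the first `sL` elements of the list. -/
abbrev CechLevelLeft (D : CechData K n M s f) (sL : ℕ) (i : ℤ) : Type :=
  ∀ S : {S : Finset (Fin s) // (S.card : ℤ) = i ∧ ∀ x ∈ S, (x : ℕ) < sL},
    (D.L S.1).carrier

/-- The Čech differential of the subcomplex. -/
noncomputable def cechDiffLeft (D : CechData K n M s f) (sL : ℕ) (a b : ℤ)
    (ψ : CechLevelLeft D sL a)
    (T : {S : Finset (Fin s) // (S.card : ℤ) = b ∧ ∀ x ∈ S, (x : ℕ) < sL}) :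
    (D.L T.1).carrier :=
  ∑ k ∈ T.1.attach, ((-1 : ℤ) ^ ((T.1.filter (fun x => x < k.1)).card)) •
    (if h : (((T.1.erase k.1).card : ℤ)) = a ∧ ∀ x ∈ T.1.erase k.1, (x : ℕ) < sL then
      D.ρ (Finset.erase_subset k.1 T.1) (ψ ⟨T.1.erase k.1, h⟩) else 0)

def cechLeftIsCycle (D : CechData K n M s f) (sL : ℕ) (i : ℤ)
    (φ : CechLevelLeft D sL i) : Prop :=
  ∀ T, cechDiffLeft D sL i (i + 1) φ T = 0

def cechLeftIsBoundary (D : CechData K n M s f) (sL : ℕ) (i : ℤ)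
    (φ : CechLevelLeft D sL i) : Prop :=
  ∃ ψ : CechLevelLeft D sL (i - 1), (fun T => cechDiffLeft D sL (i - 1) i ψ T) = φ

def cechLeftHomog (D : CechData K n M s f) (sL : ℕ) (i j : ℤ)
    (φ : CechLevelLeft D sL i) : Prop :=
  ∀ S, φ S ∈ (D.L S.1).deg j

/-- The restriction chain map from the full Čech complex (computing `RΓ_{Y'}`) to the
subcomplex (computing `RΓ_{Y''}`). -/
def cechRestr (D : CechData K n M s f) (sL : ℕ) (i : ℤ) (φ : CechLevel D i) :
    CechLevelLeft D sL i :=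
  fun T => φ ⟨T.1, T.2.1⟩

/-- Level `i` of the mapping cone of `cechRestr`, computing `RΓ_Y` for the locally closed
set `Y = Y'' - Y'`. -/
abbrev ConeLevel (D : CechData K n M s f) (sL : ℕ) (i : ℤ) : Type :=
  CechLevel D (i + 1) × CechLevelLeft D sL i

/-- The differential of the mapping cone (the genuine one for `b = a + 1`). -/
noncomputable def coneDiff (D : CechData K n M s f) (sL : ℕ) (a b : ℤ)
    (z : ConeLevel D sL a) : ConeLevel D sL b :=
  ( fun T => - cechDiff D (a + 1) (b + 1) z.1 T,
    fun T => (if h : ((T.1.card : ℤ)) = a + 1 then z.1 ⟨T.1, h⟩ else 0) +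
      cechDiffLeft D sL a b z.2 T )

def coneIsCycle (D : CechData K n M s f) (sL : ℕ) (i : ℤ) (z : ConeLevel D sL i) : Prop :=
  coneDiff D sL i (i + 1) z = 0

def coneIsBoundary (D : CechData K n M s f) (sL : ℕ) (i : ℤ)
    (z : ConeLevel D sL i) : Prop :=
  ∃ w : ConeLevel D sL (i - 1), coneDiff D sL (i - 1) i w = z

def coneHomog (D : CechData K n M s f) (sL : ℕ) (i j : ℤ) (z : ConeLevel D sL i) : Prop :=
  (∀ S, z.1 S ∈ (D.L S.1).deg j) ∧ (∀ S, z.2 S ∈ (D.L S.1).deg j)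

/-- `W` realizes `H^i_Y(M)` for the homogeneous locally closed set `Y` presented by the
Čech–cone data. -/
def IsConeCohomologyOf (D : CechData K n M s f) (sL : ℕ) (i : ℤ) (W : GWM K n) : Prop :=
  ∃ π : ConeLevel D sL i → W.carrier,
    (∀ x y, π (x + y) = π x + π y) ∧
    (∀ (w : WeylAlgebra K n) x, π (w • x) = w • π x) ∧
    (∀ z, coneIsCycle D sL i z → (π z = 0 ↔ coneIsBoundary D sL i z)) ∧
    (∀ (j : ℤ) z, coneIsCycle D sL i z → coneHomog D sL i j z → π z ∈ W.deg j) ∧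
    (∀ (j : ℤ) (w : W.carrier), w ∈ W.deg j →
      ∃ z, coneIsCycle D sL i z ∧ coneHomog D sL i j z ∧ π z = w)

/-- `W` realizes the kernel of the arrow `H^i_{Y'}(M) → H^i_{Y''}(M)`. -/
def IsKerArrow1Of (D : CechData K n M s f) (sL : ℕ) (i : ℤ) (W : GWM K n) : Prop :=
  ∃ π : CechLevel D i → W.carrier,
    (∀ x y, π (x + y) = π x + π y) ∧
    (∀ (w : WeylAlgebra K n) x, π (w • x) = w • π x) ∧
    (∀ x, cechIsCycle D i x → cechLeftIsBoundary D sL i (cechRestr D sL i x) →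
      (π x = 0 ↔ cechIsBoundary D i x)) ∧
    (∀ (j : ℤ) x, cechIsCycle D i x → cechLeftIsBoundary D sL i (cechRestr D sL i x) →
      cechHomog D i j x → π x ∈ W.deg j) ∧
    (∀ (j : ℤ) (w : W.carrier), w ∈ W.deg j →
      ∃ x, cechIsCycle D i x ∧ cechLeftIsBoundary D sL i (cechRestr D sL i x) ∧
        cechHomog D i j x ∧ π x = w)

/-- `W` realizes the kernel of the arrow `H^i_{Y''}(M) → H^i_Y(M)`. -/
def IsKerArrow2Of (D : CechData K n M s f) (sL : ℕ) (i : ℤ) (W : GWM K n) : Prop :=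
  ∃ π : CechLevelLeft D sL i → W.carrier,
    (∀ x y, π (x + y) = π x + π y) ∧
    (∀ (w : WeylAlgebra K n) x, π (w • x) = w • π x) ∧
    (∀ x, cechLeftIsCycle D sL i x → coneIsBoundary D sL i (0, x) →
      (π x = 0 ↔ cechLeftIsBoundary D sL i x)) ∧
    (∀ (j : ℤ) x, cechLeftIsCycle D sL i x → coneIsBoundary D sL i (0, x) →
      cechLeftHomog D sL i j x → π x ∈ W.deg j) ∧
    (∀ (j : ℤ) (w : W.carrier), w ∈ W.deg j →
      ∃ x, cechLeftIsCycle D sL i x ∧ coneIsBoundary D sL i (0, x) ∧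
        cechLeftHomog D sL i j x ∧ π x = w)

/-- `W` realizes the kernel of the arrow `H^i_Y(M) → H^{i+1}_{Y'}(M)`. -/
def IsKerArrow3Of (D : CechData K n M s f) (sL : ℕ) (i : ℤ) (W : GWM K n) : Prop :=
  ∃ π : ConeLevel D sL i → W.carrier,
    (∀ x y, π (x + y) = π x + π y) ∧
    (∀ (w : WeylAlgebra K n) x, π (w • x) = w • π x) ∧
    (∀ z, coneIsCycle D sL i z → cechIsBoundary D (i + 1) z.1 →
      (π z = 0 ↔ coneIsBoundary D sL i z)) ∧
    (∀ (j : ℤ) z, coneIsCycle D sL i z → cechIsBoundary D (i + 1) z.1 →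
      coneHomog D sL i j z → π z ∈ W.deg j) ∧
    (∀ (j : ℤ) (w : W.carrier), w ∈ W.deg j →
      ∃ z, coneIsCycle D sL i z ∧ cechIsBoundary D (i + 1) z.1 ∧
        coneHomog D sL i j z ∧ π z = w)

end Lyubeznik

/-- One step of a graded Lyubeznik functor: `W` is obtained from `V` either as
`H^i_Y(V)` for a homogeneous locally closed `Y ⊆ Spec R`, or as the kernel of one of the
three arrows in the exact sequence `H^i_{Y'} → H^i_{Y''} → H^i_Y → H^{i+1}_{Y'}`. -/
inductive LyubeznikStep (K : Type) [Field K] (n : ℕ) : GWM K n → GWM K n → Prop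
  | cone (V W : GWM K n) (s sL : ℕ) (f : Fin s → WeylAlgebra K n) (df : Fin s → ℕ)
      (hf : ∀ k, IsHomogPoly K (f k) (df k)) (D : CechData K n V s f) (i : ℤ)
      (h : IsConeCohomologyOf D sL i W) : LyubeznikStep K n V W
  | ker1 (V W : GWM K n) (s sL : ℕ) (f : Fin s → WeylAlgebra K n) (df : Fin s → ℕ)
      (hf : ∀ k, IsHomogPoly K (f k) (df k)) (D : CechData K n V s f) (i : ℤ)
      (h : IsKerArrow1Of D sL i W) : LyubeznikStep K n V W
  | ker2 (V W : GWM K n) (s sL : ℕ) (f : Fin s → WeylAlgebra K n) (df : Fin s → ℕ)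
      (hf : ∀ k, IsHomogPoly K (f k) (df k)) (D : CechData K n V s f) (i : ℤ)
      (h : IsKerArrow2Of D sL i W) : LyubeznikStep K n V W
  | ker3 (V W : GWM K n) (s sL : ℕ) (f : Fin s → WeylAlgebra K n) (df : Fin s → ℕ)
      (hf : ∀ k, IsHomogPoly K (f k) (df k)) (D : CechData K n V s f) (i : ℤ)
      (h : IsKerArrow3Of D sL i W) : LyubeznikStep K n V W

/-- `W = 𝒯(V)` for some graded Lyubeznik functor `𝒯` (a finite composition of the
basic steps). -/
def IsLyubeznikValue (K : Type) [Field K] (n : ℕ) (V W : GWM K n) : Prop :=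
  Relation.ReflTransGen (LyubeznikStep K n) V W

/-!
`R = A_n(K) e` with `∂_i e = 0` is Eulerian: a homogeneous `c ∈ A_n(K)` of degree `t` satisfies
`[ℰ_n, c] = t c`, hence `(ℰ_n - t)(c e) = c ℰ_n e = 0`, and `A_n(K)` is spanned by homogeneous
elements. Localizing at a homogeneous `g` preserves the generalized Eulerian property, because
`g^k (ℰ_n - j)^a = (ℰ_n - j - k deg g)^a g^k` and `g^k` acts injectively. Finally each basic
Lyubeznik functor produces a module whose homogeneous elements are classes of homogeneous Čech
or cone cochains, i.e. of finite tuples of homogeneous elements of such localizations, and a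
common power of `ℰ_n - j` kills all entries of such a tuple.
-/

section WeylAlgebra

variable {K : Type} [Field K] {n : ℕ}

theorem Wx_commute_Wx (i j : Fin n) : Commute (Wx K i) (Wx K j) := by
  unfold Commute SemiconjBy Wx
  rw [← map_mul, RingQuot.mkAlgHom_rel K (WeylRel.xx i j), map_mul]

theorem Wd_commute_Wd (i j : Fin n) : Commute (Wd K i) (Wd K j) := by
  unfold Commute SemiconjBy Wd
  rw [← map_mul, RingQuot.mkAlgHom_rel K (WeylRel.dd i j), map_mul]

theorem Wd_mul_Wx (i j : Fin n) :
    Wd K i * Wx K j = Wx K j * Wd K i + if i = j then 1 else 0 := by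
  unfold Wd Wx
  rw [← map_mul, RingQuot.mkAlgHom_rel K (WeylRel.dx i j), map_add, map_mul]
  split_ifs <;> simp

theorem weylEuler_mul_Wx (j : Fin n) :
    weylEuler K n * Wx K j = Wx K j * weylEuler K n + Wx K j := by
  have h (i : Fin n) : Wx K i * Wd K i * Wx K j
      = Wx K j * (Wx K i * Wd K i) + if i = j then Wx K i else 0 := by
    rw [mul_assoc, Wd_mul_Wx, mul_add, ← mul_assoc, (Wx_commute_Wx i j).eq, mul_assoc]
    split_ifs <;> simp
  simp only [weylEuler, Finset.sum_mul, Finset.mul_sum, h, Finset.sum_add_distrib,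
    Finset.sum_ite_eq', Finset.mem_univ, if_true]

theorem weylEuler_mul_Wd (j : Fin n) :
    weylEuler K n * Wd K j = Wd K j * weylEuler K n - Wd K j := by
  have h (i : Fin n) : Wd K j * (Wx K i * Wd K i)
      = Wx K i * Wd K i * Wd K j + if j = i then Wd K i else 0 := by
    rw [← mul_assoc, Wd_mul_Wx, add_mul, mul_assoc, (Wd_commute_Wd j i).eq, ← mul_assoc]
    split_ifs <;> simp
  simp only [weylEuler, Finset.sum_mul, Finset.mul_sum, h, Finset.sum_add_distrib,
    Finset.sum_ite_eq, Finset.mem_univ, if_true, add_sub_cancel_right]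

variable (K n) in
/-- The degree-`t` part of `A_n(K)`, through the two properties of a homogeneous element of
degree `t` that matter here: `[ℰ_n, g] = t g`, and `g` shifts degrees by `t` in every graded
module. -/
def weylHomog (t : ℤ) : Submodule K (WeylAlgebra K n) where
  carrier := {g | weylEuler K n * g = g * weylEuler K n + t * g ∧
    ∀ (M : GWM K n) (j : ℤ), ∀ z ∈ M.deg j, g • z ∈ M.deg (j + t)}
  zero_mem' := ⟨by simp, fun M j _ _ => by simp⟩
  add_mem' := by
    rintro a b ⟨ha, ha'⟩ ⟨hb, hb'⟩
    refine ⟨by rw [mul_add, ha, hb]; noncomm_ring, fun M j z hz => ?_⟩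
    rw [add_smul]
    exact add_mem (ha' M j z hz) (hb' M j z hz)
  smul_mem' := by
    rintro c g ⟨hg, hg'⟩
    refine ⟨by rw [mul_smul_comm, hg, smul_add, smul_mul_assoc, mul_smul_comm], fun M j z hz => ?_⟩
    rw [Algebra.smul_def, mul_smul]
    exact M.k_smul c _ _ (hg' M j z hz)

theorem mul_mem_weylHomog {a b : WeylAlgebra K n} {p q : ℤ} (ha : a ∈ weylHomog K n p)
    (hb : b ∈ weylHomog K n q) : a * b ∈ weylHomog K n (p + q) := by
  refine ⟨?_, fun M j z hz => ?_⟩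
  · have hq : a * ((q : WeylAlgebra K n) * b) = q * (a * b) := by
      rw [← mul_assoc, ← Int.cast_comm, mul_assoc]
    rw [← mul_assoc, ha.1, add_mul, mul_assoc, hb.1, mul_add, hq, Int.cast_add, add_mul]
    noncomm_ring
  · rw [mul_smul, ← add_comm q, ← add_assoc]
    exact ha.2 M _ _ (hb.2 M j z hz)

theorem one_mem_weylHomog_zero : (1 : WeylAlgebra K n) ∈ weylHomog K n 0 :=
  ⟨by simp, fun M j z hz => by simpa using hz⟩

theorem pow_mem_weylHomog {g : WeylAlgebra K n} {t : ℤ} (hg : g ∈ weylHomog K n t) (k : ℕ) :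
    g ^ k ∈ weylHomog K n (k * t) := by
  induction k with
  | zero => simp [one_mem_weylHomog_zero]
  | succ k ih => simpa [pow_succ, add_mul] using mul_mem_weylHomog ih hg

theorem list_prod_mem_weylHomog {ι : Type*} {g : ι → WeylAlgebra K n} {d : ι → ℤ}
    (hg : ∀ i, g i ∈ weylHomog K n (d i)) (l : List ι) :
    (l.map g).prod ∈ weylHomog K n (l.map d).sum := by
  induction l with
  | nil => exact one_mem_weylHomog_zero
  | cons i l ih => exact mul_mem_weylHomog (hg i) ih

theorem Wx_mem_weylHomog (i : Fin n) : Wx K i ∈ weylHomog K n 1 :=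
  ⟨by rw [weylEuler_mul_Wx, Int.cast_one, one_mul], fun M j => M.x_smul i j⟩

theorem Wd_mem_weylHomog (i : Fin n) : Wd K i ∈ weylHomog K n (-1) :=
  ⟨by rw [weylEuler_mul_Wd, sub_eq_add_neg, Int.cast_neg, Int.cast_one]; exact congrArg _ (neg_one_mul (Wd K i)).symm,
    fun M j => M.d_smul i j⟩

theorem IsHomogPoly.mem_weylHomog {f : WeylAlgebra K n} {d : ℕ} (hf : IsHomogPoly K f d) :
    f ∈ weylHomog K n d := by
  refine Submodule.span_le.2 ?_ hf
  rintro _ ⟨l, rfl, rfl⟩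
  simpa using list_prod_mem_weylHomog (d := fun _ => 1) Wx_mem_weylHomog l

theorem mul_mem_iSup_weylHomog {a b : WeylAlgebra K n} (ha : a ∈ ⨆ t, weylHomog K n t)
    (hb : b ∈ ⨆ t, weylHomog K n t) : a * b ∈ ⨆ t, weylHomog K n t := by
  refine Submodule.iSup_induction (motive := (· * b ∈ _)) _ ha (fun p a ha => ?_) (by simp)
    fun a a' h h' => by rw [add_mul]; exact add_mem h h'
  refine Submodule.iSup_induction (motive := (a * · ∈ _)) _ hb (fun q b hb => ?_) (by simp)
    fun b b' h h' => by rw [mul_add]; exact add_mem h h'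
  exact Submodule.mem_iSup_of_mem (p + q) (mul_mem_weylHomog ha hb)

theorem iSup_weylHomog_eq_top : ⨆ t, weylHomog K n t = ⊤ := by
  refine Submodule.eq_top_iff'.2 fun w => ?_
  obtain ⟨x, rfl⟩ := RingQuot.mkAlgHom_surjective K (WeylRel K n) w
  induction x using FreeAlgebra.induction with
  | grade0 c =>
    rw [AlgHom.commutes, Algebra.algebraMap_eq_smul_one]
    exact Submodule.mem_iSup_of_mem 0 (Submodule.smul_mem _ c one_mem_weylHomog_zero)
  | grade1 i =>
    cases i with
    | inl i => exact Submodule.mem_iSup_of_mem 1 (Wx_mem_weylHomog i)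
    | inr i => exact Submodule.mem_iSup_of_mem (-1) (Wd_mem_weylHomog i)
  | add a b ha hb => rw [map_add]; exact add_mem ha hb
  | mul a b ha hb => rw [map_mul]; exact mul_mem_iSup_weylHomog ha hb

theorem semiconjBy_of_mem_weylHomog {g : WeylAlgebra K n} {t : ℤ} (hg : g ∈ weylHomog K n t)
    (j : ℤ) :
    SemiconjBy g (weylEuler K n - j) (weylEuler K n - ((j + t : ℤ) : WeylAlgebra K n)) := by
  unfold SemiconjBy
  rw [sub_mul, mul_sub, hg.1, Int.cast_add, add_mul, Int.cast_comm j g]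
  abel

end WeylAlgebra

theorem iSupIndep.inf_iSup_le_of_le {α ι : Type*} [CompleteLattice α] [IsModularLattice α]
    {f g : ι → α} (hg : iSupIndep g) (hfg : f ≤ g) (i : ι) : g i ⊓ ⨆ j, f j ≤ f i := by
  rw [iSup_split_single f i, inf_comm, sup_inf_assoc_of_le _ (hfg i)]
  exact sup_le le_rfl
    (((hg i).symm.mono_left (iSup₂_mono fun j _ => hfg j)).eq_bot.trans_le bot_le)

theorem pow_smul_eq_zero_of_le {R X : Type*} [Monoid R] [AddMonoid X] [DistribMulAction R X]
    {u : R} {x : X} {a b : ℕ} (hab : a ≤ b) (h : u ^ a • x = 0) : u ^ b • x = 0 := by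
  obtain ⟨c, rfl⟩ := Nat.exists_eq_add_of_le hab
  rw [add_comm, pow_add, mul_smul, h, smul_zero]

section EulerGenEigenspace

variable {K : Type} [Field K] {n : ℕ}

variable (K n) in
def eulerGenEigenspace (X : Type*) [AddCommGroup X] [Module (WeylAlgebra K n) X] (j : ℤ) :
    AddSubgroup X where
  carrier := {x | ∃ a : ℕ, (weylEuler K n - j) ^ a • x = 0}
  zero_mem' := ⟨0, smul_zero _⟩
  add_mem' := by
    rintro x y ⟨a, ha⟩ ⟨b, hb⟩
    refine ⟨max a b, ?_⟩
    rw [smul_add, pow_smul_eq_zero_of_le (le_max_left a b) ha,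
      pow_smul_eq_zero_of_le (le_max_right a b) hb, add_zero]
  neg_mem' := by
    rintro x ⟨a, ha⟩
    exact ⟨a, by rw [smul_neg, ha, neg_zero]⟩

variable {X Y : Type*} [AddCommGroup X] [Module (WeylAlgebra K n) X]
  [AddCommGroup Y] [Module (WeylAlgebra K n) Y]

theorem map_mem_eulerGenEigenspace (φ : X →ₗ[WeylAlgebra K n] Y) {j : ℤ} {x : X}
    (hx : x ∈ eulerGenEigenspace K n X j) : φ x ∈ eulerGenEigenspace K n Y j := by
  obtain ⟨a, ha⟩ := hx
  exact ⟨a, by rw [← map_smul, ha, map_zero]⟩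

theorem prod_mem_eulerGenEigenspace {j : ℤ} {z : X × Y} (h₁ : z.1 ∈ eulerGenEigenspace K n X j)
    (h₂ : z.2 ∈ eulerGenEigenspace K n Y j) : z ∈ eulerGenEigenspace K n (X × Y) j := by
  rw [← Prod.fst_add_snd z]
  exact add_mem (map_mem_eulerGenEigenspace (LinearMap.inl _ X Y) h₁)
    (map_mem_eulerGenEigenspace (LinearMap.inr _ X Y) h₂)

theorem pi_mem_eulerGenEigenspace {ι : Type*} [Finite ι] {Z : ι → Type*}
    [∀ i, AddCommGroup (Z i)] [∀ i, Module (WeylAlgebra K n) (Z i)] {j : ℤ} {x : ∀ i, Z i}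
    (hx : ∀ i, x i ∈ eulerGenEigenspace K n (Z i) j) :
    x ∈ eulerGenEigenspace K n (∀ i, Z i) j := by
  classical
  cases nonempty_fintype ι
  rw [← Finset.univ_sum_single x]
  exact sum_mem fun i _ => map_mem_eulerGenEigenspace (LinearMap.single _ Z i) (hx i)

theorem mem_eulerGenEigenspace_of_smul_mem {g : WeylAlgebra K n} {t j : ℤ}
    (hg : g ∈ weylHomog K n t) (hinj : Function.Injective (g • · : X → X)) {x : X}
    (hx : g • x ∈ eulerGenEigenspace K n X (j + t)) : x ∈ eulerGenEigenspace K n X j := by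
  obtain ⟨a, ha⟩ := hx
  refine ⟨a, hinj ?_⟩
  dsimp only
  rw [smul_zero, ← mul_smul, ((semiconjBy_of_mem_weylHomog hg j).pow_right a).eq, mul_smul, ha]

end EulerGenEigenspace

namespace GWM

variable {K : Type} [Field K] {n : ℕ}

theorem isGenEulerian_iff {M : GWM K n} :
    M.IsGenEulerian ↔ ∀ j, M.deg j ≤ eulerGenEigenspace K n M.carrier j := by
  refine ⟨fun h j m hm => ?_, fun h j m hm => ?_⟩
  · obtain ⟨a, -, ha⟩ := h j m hm
    exact ⟨a, ha⟩
  · obtain ⟨a, ha⟩ := h j hm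
    exact ⟨a + 1, Nat.le_add_left 1 a, pow_smul_eq_zero_of_le a.le_succ ha⟩

theorem iSup_deg_eq_top (M : GWM K n) : ⨆ j, M.deg j = ⊤ := by
  refine (AddSubgroup.eq_top_iff' _).2 fun m => ?_
  obtain ⟨d, rfl⟩ := M.isInternal.surjective m
  induction d using DirectSum.induction_on with
  | zero => exact zero_mem _
  | of j x =>
    rw [DirectSum.coeAddMonoidHom_of]
    exact AddSubgroup.mem_iSup_of_mem j x.2
  | add x y hx hy =>
    rw [map_add]
    exact add_mem hx hy

theorem deg_inf_range_le_map {M N : GWM K n} (φ : M.carrier →+ N.carrier)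
    (hφ : ∀ j, ∀ m ∈ M.deg j, φ m ∈ N.deg j) (j : ℤ) :
    N.deg j ⊓ φ.range ≤ (M.deg j).map φ := by
  rw [AddMonoidHom.range_eq_map, ← M.iSup_deg_eq_top, AddSubgroup.map_iSup]
  exact N.isInternal.addSubgroup_iSupIndep.inf_iSup_le_of_le
    (fun t => AddSubgroup.map_le_iff_le_comap.2 (hφ t)) j

theorem isGenEulerian_of_exists_preimage {X : Type*} [AddCommGroup X]
    [Module (WeylAlgebra K n) X] {W : GWM K n} (π : X → W.carrier)
    (hadd : ∀ x y, π (x + y) = π x + π y)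
    (hsmul : ∀ (w : WeylAlgebra K n) x, π (w • x) = w • π x)
    (h : ∀ j, ∀ w ∈ W.deg j, ∃ x ∈ eulerGenEigenspace K n X j, π x = w) :
    W.IsGenEulerian := by
  let φ : X →ₗ[WeylAlgebra K n] W.carrier :=
    { toFun := π, map_add' := hadd, map_smul' := hsmul }
  refine isGenEulerian_iff.2 fun j w hw => ?_
  obtain ⟨x, hx, rfl⟩ := h j w hw
  exact map_mem_eulerGenEigenspace φ hx

end GWM

section Polynomial

variable {K : Type} [Field K] {n : ℕ}

theorem isGenEulerian_of_isPolynomialGWM {R0 : GWM K n} (hR0 : IsPolynomialGWM K R0) :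
    R0.IsGenEulerian := by
  obtain ⟨e, he, hde, hspan, -⟩ := hR0
  have hEe : weylEuler K n • e = 0 := by
    simp [weylEuler, Finset.sum_smul, mul_smul, hde]
  have hhomog (t : ℤ) (c : WeylAlgebra K n) (hc : c ∈ weylHomog K n t) :
      c • e ∈ R0.deg t ⊓ eulerGenEigenspace K n R0.carrier t := by
    refine ⟨by simpa using hc.2 R0 0 e he, 1, ?_⟩
    rw [pow_one, ← mul_smul, sub_mul, hc.1, add_sub_cancel_right, mul_smul, hEe, smul_zero]
  have htop : ⨆ t, R0.deg t ⊓ eulerGenEigenspace K n R0.carrier t = ⊤ := by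
    refine (AddSubgroup.eq_top_iff' _).2 fun m => ?_
    obtain ⟨w, rfl⟩ := Submodule.mem_span_singleton.1 (hspan ▸ Submodule.mem_top (x := m))
    have hw : w ∈ ⨆ t, weylHomog K n t := iSup_weylHomog_eq_top (K := K) ▸ Submodule.mem_top
    refine Submodule.iSup_induction (motive := (· • e ∈ _)) _ hw
      (fun t c hc => AddSubgroup.mem_iSup_of_mem t (hhomog t c hc)) (by simp)
      fun a b ha hb => ?_
    rw [add_smul]
    exact add_mem ha hb
  refine GWM.isGenEulerian_iff.2 fun j => ?_
  calc R0.deg j = R0.deg j ⊓ ⨆ t, R0.deg t ⊓ eulerGenEigenspace K n R0.carrier t := by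
        rw [htop, inf_top_eq]
    _ ≤ R0.deg j ⊓ eulerGenEigenspace K n R0.carrier j :=
        R0.isInternal.addSubgroup_iSupIndep.inf_iSup_le_of_le (fun _ => inf_le_left) j
    _ ≤ eulerGenEigenspace K n R0.carrier j := inf_le_right

end Polynomial

namespace CechData

variable {K : Type} [Field K] {n : ℕ} {M : GWM K n} {s : ℕ} {f : Fin s → WeylAlgebra K n}

theorem exists_cechProd_mem_weylHomog {df : Fin s → ℕ} (hf : ∀ k, IsHomogPoly K (f k) (df k))
    (S : Finset (Fin s)) : ∃ t, cechProd f S ∈ weylHomog K n t :=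
  ⟨_, list_prod_mem_weylHomog (fun k => (hf k).mem_weylHomog) _⟩

def locMap (D : CechData K n M s f) (S : Finset (Fin s)) :
    M.carrier →ₗ[WeylAlgebra K n] (D.L S).carrier where
  toFun m := D.ρ (Finset.empty_subset S) (D.η m)
  map_add' x y := by rw [D.η_add, D.ρ_add]
  map_smul' w x := by rw [D.η_smul, D.ρ_smul]; rfl

/-- For `z` of degree `j` in `M_g`, write `g^k z` as the image of some `m ∈ M`, which may be
taken of degree `j + k deg g`; then `g^k z` is killed by a power of `ℰ_n - j - k deg g`, and
`g^k` can be cancelled. -/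
theorem isGenEulerian_L {df : Fin s → ℕ} (hf : ∀ k, IsHomogPoly K (f k) (df k))
    (D : CechData K n M s f) (hM : M.IsGenEulerian) (S : Finset (Fin s)) :
    (D.L S).IsGenEulerian := by
  refine GWM.isGenEulerian_iff.2 fun j z hz => ?_
  obtain ⟨t, hg⟩ := exists_cechProd_mem_weylHomog hf S
  obtain ⟨m, k, hk⟩ := D.loc_surj S z
  have hgk := pow_mem_weylHomog hg k
  have hinj : Function.Injective (cechProd f S ^ k • · : (D.L S).carrier → _) := by
    rw [← smul_iterate]
    exact (D.loc_bij S).injective.iterate k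
  refine mem_eulerGenEigenspace_of_smul_mem hgk hinj ?_
  have hdeg (j : ℤ) (m : M.carrier) (hm : m ∈ M.deg j) : D.locMap S m ∈ (D.L S).deg j :=
    D.ρ_deg _ j _ (D.η_deg j m hm)
  obtain ⟨m', hm', hm'z⟩ := GWM.deg_inf_range_le_map (D.locMap S).toAddMonoidHom hdeg _
    ⟨hgk.2 _ j z hz, m, hk.symm⟩
  rw [← hm'z]
  exact map_mem_eulerGenEigenspace (D.locMap S) (GWM.isGenEulerian_iff.1 hM _ hm')

theorem pi_mem_eulerGenEigenspace {df : Fin s → ℕ} (hf : ∀ k, IsHomogPoly K (f k) (df k))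
    (D : CechData K n M s f) (hM : M.IsGenEulerian) {ι : Type} [Finite ι]
    (σ : ι → Finset (Fin s)) {j : ℤ} {x : ∀ i, (D.L (σ i)).carrier}
    (hx : ∀ i, x i ∈ (D.L (σ i)).deg j) :
    x ∈ eulerGenEigenspace K n (∀ i, (D.L (σ i)).carrier) j :=
  _root_.pi_mem_eulerGenEigenspace fun i =>
    GWM.isGenEulerian_iff.1 (D.isGenEulerian_L hf hM (σ i)) j (hx i)

end CechData

theorem LyubeznikStep.isGenEulerian {K : Type} [Field K] {n : ℕ} {V W : GWM K n}
    (h : LyubeznikStep K n V W) (hV : V.IsGenEulerian) : W.IsGenEulerian := by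
  cases h with
  | cone s sL f df hf D i h =>
    obtain ⟨π, hadd, hsmul, -, -, hsurj⟩ := h
    refine GWM.isGenEulerian_of_exists_preimage π hadd hsmul fun j w hw => ?_
    obtain ⟨z, -, ⟨h₁, h₂⟩, hz⟩ := hsurj j w hw
    exact ⟨z, prod_mem_eulerGenEigenspace (D.pi_mem_eulerGenEigenspace hf hV Subtype.val h₁)
      (D.pi_mem_eulerGenEigenspace hf hV Subtype.val h₂), hz⟩
  | ker1 s sL f df hf D i h =>
    obtain ⟨π, hadd, hsmul, -, -, hsurj⟩ := h
    refine GWM.isGenEulerian_of_exists_preimage π hadd hsmul fun j w hw => ?_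
    obtain ⟨x, -, -, hx, hπ⟩ := hsurj j w hw
    exact ⟨x, D.pi_mem_eulerGenEigenspace hf hV Subtype.val hx, hπ⟩
  | ker2 s sL f df hf D i h =>
    obtain ⟨π, hadd, hsmul, -, -, hsurj⟩ := h
    refine GWM.isGenEulerian_of_exists_preimage π hadd hsmul fun j w hw => ?_
    obtain ⟨x, -, -, hx, hπ⟩ := hsurj j w hw
    exact ⟨x, D.pi_mem_eulerGenEigenspace hf hV Subtype.val hx, hπ⟩
  | ker3 s sL f df hf D i h =>
    obtain ⟨π, hadd, hsmul, -, -, hsurj⟩ := h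
    refine GWM.isGenEulerian_of_exists_preimage π hadd hsmul fun j w hw => ?_
    obtain ⟨z, -, -, ⟨h₁, h₂⟩, hz⟩ := hsurj j w hw
    exact ⟨z, prod_mem_eulerGenEigenspace (D.pi_mem_eulerGenEigenspace hf hV Subtype.val h₁)
      (D.pi_mem_eulerGenEigenspace hf hV Subtype.val h₂), hz⟩

theorem lyubeznik_functor_value_is_generalizedEulerian_general
    (K : Type) [Field K] (n : ℕ)
    (R0 : GWM K n) (hR0 : IsPolynomialGWM K R0)
    (W : GWM K n) (hW : IsLyubeznikValue K n R0 W) :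
    W.IsGenEulerian := by
  induction hW with
  | refl => exact isGenEulerian_of_isPolynomialGWM hR0
  | tail _ hstep ih => exact hstep.isGenEulerian ih

/-- Theorem `third`.  Let `𝒯` be a graded Lyubeznik functor on the
category of graded `R`-modules.  Then `𝒯(R)` is a generalized Eulerian `A_n(K)`-module.
Here `R₀` is `R = K[X_1, …, X_n]` as a graded `A_n(K)`-module, and `W = 𝒯(R₀)` ranges over
all values of graded Lyubeznik functors at `R₀`. -/
theorem lyubeznik_functor_value_is_generalizedEulerian
    (K : Type) [Field K] [CharZero K] (n : ℕ)
    (R0 : GWM K n) (hR0 : IsPolynomialGWM K R0)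
    (W : GWM K n) (hW : IsLyubeznikValue K n R0 W) :
    W.IsGenEulerian :=
  lyubeznik_functor_value_is_generalizedEulerian_general K n R0 hR0 W hW
end
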